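/- Fix an integer ν ≥ 1 and let P¹ ∈ 𝒱̃₁ with P¹_i(z) = a¹_{i,1} z₁ + a¹_{i,0} z₂ for i = 1,2, and fix d ≥ 2. Then, with the conventions a¹_{1,2} = 0 = a¹_{2,−1}, the linear map L_{P¹,d} acts on the basis of 𝒱_d by: L_{P¹,d}(v_d^h) = Σ_{i=0}^{2} [ (ν+i−h) a¹_{1,i} − (d−h) a¹_{2,i−1} ] v_d^{h+i−1} + Σ_{i=0}^{1} (ν+i) a¹_{2,i} v_d^{h+i+d} for h = 1,…,d, and L_{P¹,d}(v_d^{k+d+1}) = a¹_{1,0} v_d^{k} + Σ_{i=0}^{2} [ (k+2−d−i) a¹_{2,i−1} − k a¹_{1,i} ] v_d^{k+i+d} for k = 0,…,d. -/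

import Mathlib

noncomputable section

/-- An element `H ∈ 𝒱_d`, that is a pair of homogeneous polynomials of degree `d` whose first
component is divisible by `z₁`, encoded by the data `(Ȟ₁, H₂)` with `H₁ = z₁ Ȟ₁`. -/
def Vpair (Hc H2 : MvPolynomial (Fin 2) ℂ) : Fin 2 → MvPolynomial (Fin 2) ℂ :=
  ![MvPolynomial.X 0 * Hc, H2]

/-- The linear map `L_{P,d}(H) = Jac(P)·H − Jac(H)·P + ν Ȟ₁ P`, on `H = (z₁ Ȟ₁, H₂) ∈ 𝒱_d`. -/
def Lmap (ν : ℕ) (P : Fin 2 → MvPolynomial (Fin 2) ℂ) (Hc H2 : MvPolynomial (Fin 2) ℂ) :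
    Fin 2 → MvPolynomial (Fin 2) ℂ :=
  fun i => (∑ j : Fin 2, MvPolynomial.pderiv j (P i) * Vpair Hc H2 j)
    - (∑ j : Fin 2, MvPolynomial.pderiv j (Vpair Hc H2 i) * P j)
    + (ν : ℂ) • (Hc * P i)

/-- The basis `v_d^h` of `𝒱̃_d`: `v_d^h = (z₁^h z₂^{d−h}, 0)` for `0 ≤ h ≤ d` and
`v_d^{d+1+k} = (0, z₁^k z₂^{d−k})` for `0 ≤ k ≤ d`. -/
def vmon (d h : ℕ) : Fin 2 → MvPolynomial (Fin 2) ℂ :=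
  if h ≤ d then ![MvPolynomial.X 0 ^ h * MvPolynomial.X 1 ^ (d - h), 0]
  else ![0, MvPolynomial.X 0 ^ (h - (d + 1)) * MvPolynomial.X 1 ^ (d - (h - (d + 1)))]

set_option maxHeartbeats 1600000 in
/-- The action of `L_{P¹,d}` on the basis of `𝒱_d`, for `P¹_i(z) = a¹_{i,1} z₁ + a¹_{i,0} z₂`,
with the conventions `a¹_{1,2} = 0 = a¹_{2,−1}`. -/
theorem Lmap_on_basis
    (ν d : ℕ) (hν : 1 ≤ ν) (hd : 2 ≤ d)
    (a10 a11 a20 a21 : ℂ)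
    -- `a¹_{1,i}` for `i = 0, 1, 2` (convention `a¹_{1,2} = 0`)
    (a1 : ℕ → ℂ) (ha1 : a1 = fun i => if i = 0 then a10 else if i = 1 then a11 else 0)
    -- `a¹_{2,i}` for `i = 0, 1`
    (a2 : ℕ → ℂ) (ha2 : a2 = fun i => if i = 0 then a20 else if i = 1 then a21 else 0)
    -- `a¹_{2,i−1}` for `i = 0, 1, 2` (convention `a¹_{2,−1} = 0`)
    (a2m : ℕ → ℂ) (ha2m : a2m = fun i => if i = 1 then a20 else if i = 2 then a21 else 0)
    (P : Fin 2 → MvPolynomial (Fin 2) ℂ)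
    (hP : P = ![a11 • MvPolynomial.X 0 + a10 • MvPolynomial.X 1,
                a21 • MvPolynomial.X 0 + a20 • MvPolynomial.X 1]) :
    (∀ h : ℕ, 1 ≤ h → h ≤ d →
      Lmap ν P (MvPolynomial.X 0 ^ (h - 1) * MvPolynomial.X 1 ^ (d - h)) 0
        = (∑ i ∈ Finset.range 3,
            (((ν : ℂ) + i - h) * a1 i - ((d : ℂ) - h) * a2m i) • vmon d (h + i - 1))
          + ∑ i ∈ Finset.range 2, (((ν : ℂ) + i) * a2 i) • vmon d (h + i + d)) ∧
    (∀ k : ℕ, k ≤ d →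
      Lmap ν P 0 (MvPolynomial.X 0 ^ k * MvPolynomial.X 1 ^ (d - k))
        = a10 • vmon d k
          + ∑ i ∈ Finset.range 3,
              (((k : ℂ) + 2 - d - i) * a2m i - (k : ℂ) * a1 i) • vmon d (k + i + d)) := by
  subst ha1 ha2 ha2m hP
  constructor
  · intro h hh1 hhd
    obtain ⟨h', rfl⟩ : ∃ h', h = h' + 1 := ⟨h - 1, by omega⟩
    obtain ⟨e, rfl⟩ : ∃ e, d = h' + 1 + e := ⟨d - (h' + 1), by omega⟩
    rcases e with _ | e'
    · obtain ⟨h'', rfl⟩ : ∃ t, h' = t + 1 := ⟨h' - 1, by omega⟩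
      funext i; fin_cases i <;>
        simp only [Finset.sum_range_succ, Finset.sum_range_zero, Lmap, Vpair, vmon,
          Fin.sum_univ_two, Fin.isValue, Matrix.cons_val_zero, Matrix.cons_val_one,
          Matrix.head_cons, MvPolynomial.smul_eq_C_mul, map_add, map_sub, map_mul, map_natCast,
          map_one, map_ofNat, Pi.add_apply, Pi.zero_apply, MvPolynomial.pderiv_X_self,
          MvPolynomial.pderiv_X_of_ne, Derivation.leibniz, Derivation.leibniz_pow] <;>
        norm_num <;>
        simp only [show h''+1+1+(h''+1+1) - (h''+1+1+1) = h''+1 from by omega,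
          show h''+1+1 - (h''+1) = 1 from by omega, MvPolynomial.smul_eq_C_mul, map_mul, map_sub,
          map_add, map_natCast, map_one, map_ofNat, pow_one] <;>
        ring
    · rcases h' with _ | h''
      · funext i; fin_cases i <;>
          simp only [Finset.sum_range_succ, Finset.sum_range_zero, Lmap, Vpair, vmon,
            Fin.sum_univ_two, Fin.isValue, Matrix.cons_val_zero, Matrix.cons_val_one,
            Matrix.head_cons, MvPolynomial.smul_eq_C_mul, map_add, map_sub, map_mul, map_natCast,
            map_one, map_ofNat, Pi.add_apply, Pi.zero_apply, MvPolynomial.pderiv_X_self,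
            MvPolynomial.pderiv_X_of_ne, Derivation.leibniz, Derivation.leibniz_pow] <;>
          norm_num <;>
          simp only [show (2:ℕ) ≤ 1 + (e'+1) from by omega,
            show 1+(e'+1)-2 = e' from by omega,
            show 1+(1+(e'+1)) - (1+(e'+1)+1) = 0 from by omega,
            show 2+(1+(e'+1)) - (1+(e'+1)+1) = 1 from by omega,
            show 1+(e'+1)-1 = e'+1 from by omega, Nat.sub_zero, pow_zero, pow_one, one_mul,
            if_true, Matrix.cons_val_zero, Matrix.cons_val_one, Matrix.head_cons,
            MvPolynomial.smul_eq_C_mul, map_mul, map_sub, map_add, map_natCast, map_one,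
            map_ofNat] <;>
          push_cast <;> ring
      · funext i; fin_cases i <;>
          simp only [Finset.sum_range_succ, Finset.sum_range_zero, Lmap, Vpair, vmon,
            Fin.sum_univ_two, Fin.isValue, Matrix.cons_val_zero, Matrix.cons_val_one,
            Matrix.head_cons, MvPolynomial.smul_eq_C_mul, map_add, map_sub, map_mul, map_natCast,
            map_one, map_ofNat, Pi.add_apply, Pi.zero_apply, MvPolynomial.pderiv_X_self,
            MvPolynomial.pderiv_X_of_ne, Derivation.leibniz, Derivation.leibniz_pow] <;>
          norm_num <;>
          simp only [show h''+1 ≤ h''+1+1+(e'+1) from by omega,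
            show h''+3 ≤ h''+1+1+(e'+1) from by omega,
            show h''+1+1+(e'+1) - (h''+1) = e'+2 from by omega,
            show h''+1+1+(e'+1) - (h''+3) = e' from by omega,
            show h''+1+1+(h''+1+1+(e'+1)) - (h''+1+1+(e'+1)+1) = h''+1 from by omega,
            show h''+1+1+1+(h''+1+1+(e'+1)) - (h''+1+1+(e'+1)+1) = h''+1+1 from by omega,
            show h''+1+1+(e'+1) - (h''+1+1) = e'+1 from by omega,
            if_true, Matrix.cons_val_zero, Matrix.cons_val_one, Matrix.head_cons,
            MvPolynomial.smul_eq_C_mul, map_mul, map_sub, map_add, map_natCast, map_one,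
            map_ofNat] <;>
          push_cast <;>
          simp (disch := omega) only [if_pos, Matrix.cons_val_zero, Matrix.cons_val_one,
            Matrix.head_cons] <;> ring
  · intro k hk
    obtain ⟨e, rfl⟩ : ∃ e, d = k + e := ⟨d - k, by omega⟩
    rcases k with _ | k'
    · obtain ⟨e'', rfl⟩ : ∃ t, e = t + 2 := ⟨e - 2, by omega⟩
      funext i; fin_cases i <;>
        simp only [Finset.sum_range_succ, Finset.sum_range_zero, Lmap, Vpair, vmon,
          Fin.sum_univ_two, Fin.isValue, Matrix.cons_val_zero, Matrix.cons_val_one,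
          Matrix.head_cons, MvPolynomial.smul_eq_C_mul, map_add, map_sub, map_mul, map_natCast,
          map_one, map_ofNat, Pi.add_apply, Pi.zero_apply, MvPolynomial.pderiv_X_self,
          MvPolynomial.pderiv_X_of_ne, Derivation.leibniz, Derivation.leibniz_pow] <;>
        norm_num <;>
        simp only [show 1+(e''+2)-(e''+2+1) = 0 from by omega,
          show 2+(e''+2)-(e''+2+1) = 1 from by omega,
          show e''+2-1 = e''+1 from by omega, Nat.sub_zero, pow_zero, pow_one, one_mul,
          MvPolynomial.smul_eq_C_mul, map_mul, map_sub, map_add, map_natCast, map_one,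
          map_ofNat, map_neg] <;>
        push_cast <;> ring
    · rcases e with _ | e'
      · funext i; fin_cases i <;>
          simp only [Finset.sum_range_succ, Finset.sum_range_zero, Lmap, Vpair, vmon,
            Fin.sum_univ_two, Fin.isValue, Matrix.cons_val_zero, Matrix.cons_val_one,
            Matrix.head_cons, MvPolynomial.smul_eq_C_mul, map_add, map_sub, map_mul, map_natCast,
            map_one, map_ofNat, Pi.add_apply, Pi.zero_apply, MvPolynomial.pderiv_X_self,
            MvPolynomial.pderiv_X_of_ne, Derivation.leibniz, Derivation.leibniz_pow] <;>
          norm_num <;>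
          simp only [show k'+1+(k'+1)-(k'+1+1) = k' from by omega,
            show k'+1-k' = 1 from by omega, pow_one,
            MvPolynomial.smul_eq_C_mul, map_mul, map_sub, map_add, map_natCast, map_one,
            map_ofNat, map_neg] <;>
          push_cast <;> ring
      · funext i; fin_cases i <;>
          simp only [Finset.sum_range_succ, Finset.sum_range_zero, Lmap, Vpair, vmon,
            Fin.sum_univ_two, Fin.isValue, Matrix.cons_val_zero, Matrix.cons_val_one,
            Matrix.head_cons, MvPolynomial.smul_eq_C_mul, map_add, map_sub, map_mul, map_natCast,
            map_one, map_ofNat, Pi.add_apply, Pi.zero_apply, MvPolynomial.pderiv_X_self,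
            MvPolynomial.pderiv_X_of_ne, Derivation.leibniz, Derivation.leibniz_pow] <;>
          norm_num <;>
          simp only [show k'+1+(k'+1+(e'+1)) - (k'+1+(e'+1)+1) = k' from by omega,
            show k'+1+1+(k'+1+(e'+1)) - (k'+1+(e'+1)+1) = k'+1 from by omega,
            show k'+1+2+(k'+1+(e'+1)) - (k'+1+(e'+1)+1) = k'+2 from by omega,
            show k'+1+(e'+1) - k' = e'+2 from by omega,
            show k'+1+(e'+1) - (k'+1) = e'+1 from by omega,
            show k'+1+(e'+1) - (k'+2) = e' from by omega,
            MvPolynomial.smul_eq_C_mul, map_mul, map_sub, map_add, map_natCast, map_one,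
            map_ofNat, map_neg] <;>
          push_cast <;> ring
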